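/- arXiv:1307.8093 — 5 statements merged into one kernel-verified Lean document; each statement's English description precedes it below -/
import Mathlib

section
/- Let b ∈ z⁻¹ℂ[[z⁻¹]] and b₁ ∈ z⁻²ℂ[[z⁻¹]] be formal power series in z⁻¹ of order at least 1 and at least 2 respectively. Then the equation C_{id−1}φ = C_{id+b}φ + b₁, i.e. φ(z−1) = φ(z+b(z)) + b₁(z), admits one and only one solution φ ∈ z⁻¹ℂ[[z⁻¹]]. -/
open Finset
open scoped Real

noncomputable section

/-- The formal derivative `d/dz` acting on `ℂ[[z⁻¹]]`: here a power series is an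
element of `PowerSeries ℂ` whose `n`-th coefficient represents the coefficient
of `z^{-n}`, and `d/dz (z^{-n}) = -n z^{-n-1}`. -/
def Dz (φ : PowerSeries ℂ) : PowerSeries ℂ :=
  PowerSeries.mk fun n => match n with
    | 0 => 0
    | m + 1 => -(m : ℂ) * PowerSeries.coeff m φ

/-- The composition operator `C_{id-1} : φ(z) ↦ φ(z-1)` on `ℂ[[z⁻¹]]`, defined by
the formal Taylor expansion `Σ_{k≥0} ((-1)^k / k!) (d/dz)^k φ`; since `(d/dz)^k`
raises the order in `z⁻¹` by at least `k`, the `n`-th coefficient only receives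
contributions from `k ≤ n`. -/
def Cm1 (φ : PowerSeries ℂ) : PowerSeries ℂ :=
  PowerSeries.mk fun n => ∑ k ∈ Finset.range (n + 1),
    ((-1 : ℂ) ^ k / (Nat.factorial k : ℂ)) * PowerSeries.coeff n (Dz^[k] φ)

/-- The composition operator `C_{id+b} : φ(z) ↦ φ(z+b(z))` on `ℂ[[z⁻¹]]`, defined
by the formal Taylor expansion `Σ_{k≥0} (b^k / k!) (d/dz)^k φ`; it is well defined
when `b ∈ z⁻¹ℂ[[z⁻¹]]`, in which case the `n`-th coefficient only receives
contributions from `k ≤ n`. -/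
def Cb (b φ : PowerSeries ℂ) : PowerSeries ℂ :=
  PowerSeries.mk fun n => ∑ k ∈ Finset.range (n + 1),
    ((Nat.factorial k : ℂ))⁻¹ * PowerSeries.coeff n (b ^ k * Dz^[k] φ)

/-!
Comparing the coefficients of `z^{-(m+2)}` on both sides, the terms of order zero of the two
Taylor expansions cancel, and the first-order term of `C_{id-1}`, namely `-φ'`, contributes
`(m + 1) φ_{m+1}`. Every other term only involves `φ_0, …, φ_m`: the `k`-th derivative moves
coefficients `k` places up, and `b^k` starts at `z^{-k}`. Hence the equation is a recursion determining
`φ_{m+1}` from the earlier coefficients, starting from `φ_0 = 0`; the coefficients of `z^0` and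
`z^{-1}` agree automatically because `b₁ ∈ z⁻²ℂ[[z⁻¹]]`.
-/

open PowerSeries

section CausalRecursion

variable {α : Type*}

def IsCausal (F : (ℕ → α) → ℕ → α) : Prop :=
  ∀ f g m, (∀ j ≤ m, f j = g j) → F f m = F g m

def causalRec (a : α) (F : (ℕ → α) → ℕ → α) : ℕ → α
  | 0 => a
  | m + 1 => F (fun j => if _ : j ≤ m then causalRec a F j else a) m
decreasing_by omega

theorem causalRec_succ {a : α} {F : (ℕ → α) → ℕ → α} (hF : IsCausal F) (m : ℕ) :
    causalRec a F (m + 1) = F (causalRec a F) m := by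
  rw [causalRec]
  exact hF _ _ m fun j hj => dif_pos hj

theorem existsUnique_of_isCausal (a : α) {F : (ℕ → α) → ℕ → α} (hF : IsCausal F) :
    ∃! f : ℕ → α, f 0 = a ∧ ∀ m, f (m + 1) = F f m := by
  refine ⟨causalRec a F, ⟨by rw [causalRec], causalRec_succ hF⟩, ?_⟩
  rintro f ⟨h0, hsucc⟩
  funext n
  induction n using Nat.strong_induction_on with
  | _ n ih =>
    cases n with
    | zero => rw [h0, causalRec]
    | succ m =>
      rw [hsucc, causalRec_succ hF]
      exact hF _ _ m fun j hj => ih j (by omega)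

end CausalRecursion

theorem PowerSeries.bijective_mk {R : Type*} [Semiring R] :
    Function.Bijective (PowerSeries.mk : (ℕ → R) → R⟦X⟧) :=
  ⟨fun f g h => funext fun n => by simpa using congrArg (coeff n) h,
    fun φ => ⟨fun n => coeff n φ, by ext; simp⟩⟩

theorem PowerSeries.coeff_pow_of_lt {R : Type*} [Semiring R] {b : R⟦X⟧}
    (hb : coeff 0 b = 0) {i k : ℕ} (h : i < k) : coeff i (b ^ k) = 0 :=
  coeff_of_lt_order i <| (Nat.cast_lt.mpr h).trans_le <|
    le_order_pow_of_constantCoeff_eq_zero k (by rwa [← coeff_zero_eq_constantCoeff_apply])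

@[simp]
lemma coeff_zero_Dz (φ : PowerSeries ℂ) : coeff 0 (Dz φ) = 0 := by simp [Dz]

lemma coeff_succ_Dz (φ : PowerSeries ℂ) (m : ℕ) :
    coeff (m + 1) (Dz φ) = -(m : ℂ) * coeff m φ := by simp [Dz]

lemma coeff_iterate_Dz_congr {φ ψ : PowerSeries ℂ} {k n : ℕ}
    (h : coeff (n - k) φ = coeff (n - k) ψ) :
    coeff n (Dz^[k] φ) = coeff n (Dz^[k] ψ) := by
  induction k generalizing n with
  | zero => simpa using h
  | succ k ih =>
    rw [Function.iterate_succ_apply', Function.iterate_succ_apply']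
    cases n with
    | zero => simp
    | succ m => rw [coeff_succ_Dz, coeff_succ_Dz, ih (by simpa using h)]

section Equation

variable (b b₁ : PowerSeries ℂ)

lemma coeff_zero_Cm1 (φ : PowerSeries ℂ) : coeff 0 (Cm1 φ) = coeff 0 φ := by
  simp [Cm1]

lemma coeff_zero_Cb (φ : PowerSeries ℂ) : coeff 0 (Cb b φ) = coeff 0 φ := by
  simp [Cb]

lemma coeff_one_Cm1 (φ : PowerSeries ℂ) : coeff 1 (Cm1 φ) = coeff 1 φ := by
  simp [Cm1, Finset.sum_range_succ, coeff_succ_Dz]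

lemma coeff_one_Cb {b : PowerSeries ℂ} (hb : coeff 0 b = 0) (φ : PowerSeries ℂ) :
    coeff 1 (Cb b φ) = coeff 1 φ := by
  simp [Cb, Finset.sum_range_succ, coeff_mul, Finset.Nat.antidiagonal_succ, hb]

def higherOrderTerms (φ : PowerSeries ℂ) (n : ℕ) : ℂ :=
  (∑ k ∈ Ico 1 (n + 1), (k.factorial : ℂ)⁻¹ * coeff n (b ^ k * Dz^[k] φ))
  + coeff n b₁
  - ∑ k ∈ Ico 2 (n + 1), ((-1 : ℂ) ^ k / k.factorial) * coeff n (Dz^[k] φ)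

lemma coeff_add_two_Cm1 (φ : PowerSeries ℂ) (m : ℕ) :
    coeff (m + 2) (Cm1 φ) = coeff (m + 2) φ - coeff (m + 2) (Dz φ) +
      ∑ k ∈ Ico 2 (m + 3), ((-1 : ℂ) ^ k / k.factorial) * coeff (m + 2) (Dz^[k] φ) := by
  rw [Cm1, coeff_mk, range_eq_Ico, sum_eq_sum_Ico_succ_bot (by omega),
    sum_eq_sum_Ico_succ_bot (by omega)]
  norm_num [sub_eq_add_neg, add_assoc]

lemma coeff_Cb (φ : PowerSeries ℂ) (n : ℕ) :
    coeff n (Cb b φ) = coeff n φ +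
      ∑ k ∈ Ico 1 (n + 1), (k.factorial : ℂ)⁻¹ * coeff n (b ^ k * Dz^[k] φ) := by
  rw [Cb, coeff_mk, range_eq_Ico, sum_eq_sum_Ico_succ_bot (by omega)]
  simp

lemma coeff_Cm1_eq_coeff_Cb_add_iff (φ : PowerSeries ℂ) (m : ℕ) :
    coeff (m + 2) (Cm1 φ) = coeff (m + 2) (Cb b φ + b₁) ↔
      ((m : ℂ) + 1) * coeff (m + 1) φ = higherOrderTerms b b₁ φ (m + 2) := by
  rw [map_add, coeff_add_two_Cm1, coeff_Cb, coeff_succ_Dz, higherOrderTerms]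
  push_cast
  constructor <;> intro h <;> linear_combination h

variable {b}

lemma higherOrderTerms_congr (hb : coeff 0 b = 0) {φ ψ : PowerSeries ℂ} {m : ℕ}
    (h : ∀ j ≤ m, coeff j φ = coeff j ψ) :
    higherOrderTerms b b₁ φ (m + 2) = higherOrderTerms b b₁ ψ (m + 2) := by
  have hCb : ∀ k ∈ Ico 1 (m + 3),
      coeff (m + 2) (b ^ k * Dz^[k] φ) = coeff (m + 2) (b ^ k * Dz^[k] ψ) := by
    intro k hk
    rw [mem_Ico] at hk
    rw [coeff_mul, coeff_mul]
    refine sum_congr rfl fun p hp => ?_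
    rw [HasAntidiagonal.mem_antidiagonal] at hp
    by_cases hpk : p.1 < k
    · simp [coeff_pow_of_lt hb hpk]
    · rw [coeff_iterate_Dz_congr (h _ (by omega))]
  have hCm1 : ∀ k ∈ Ico 2 (m + 3), coeff (m + 2) (Dz^[k] φ) = coeff (m + 2) (Dz^[k] ψ) := by
    intro k hk
    rw [mem_Ico] at hk
    exact coeff_iterate_Dz_congr (h _ (by omega))
  unfold higherOrderTerms
  rw [sum_congr rfl fun k hk => congrArg _ (hCb k hk),
    sum_congr rfl fun k hk => congrArg _ (hCm1 k hk)]

lemma Cm1_eq_Cb_add_iff (hb : coeff 0 b = 0) (hb₁ : ∀ n < 2, coeff n b₁ = 0)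
    (φ : PowerSeries ℂ) :
    Cm1 φ = Cb b φ + b₁ ↔
      ∀ m : ℕ, ((m : ℂ) + 1) * coeff (m + 1) φ = higherOrderTerms b b₁ φ (m + 2) := by
  rw [PowerSeries.ext_iff]
  refine ⟨fun h m => (coeff_Cm1_eq_coeff_Cb_add_iff b b₁ φ m).1 (h (m + 2)), fun h n => ?_⟩
  match n with
  | 0 => rw [map_add, coeff_zero_Cm1, coeff_zero_Cb, hb₁ 0 (by norm_num), add_zero]
  | 1 => rw [map_add, coeff_one_Cm1, coeff_one_Cb hb, hb₁ 1 (by norm_num), add_zero]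
  | m + 2 => exact (coeff_Cm1_eq_coeff_Cb_add_iff b b₁ φ m).2 (h m)

end Equation

/-- if `b ∈ z⁻¹ℂ[[z⁻¹]]` and `b₁ ∈ z⁻²ℂ[[z⁻¹]]`, the equation
`φ(z-1) = φ(z+b(z)) + b₁(z)` has exactly one solution `φ ∈ z⁻¹ℂ[[z⁻¹]]`. -/
theorem statement0 (b b₁ : PowerSeries ℂ)
    (hb : PowerSeries.coeff 0 b = 0)
    (hb₁ : ∀ n < 2, PowerSeries.coeff n b₁ = 0) :
    ∃! φ : PowerSeries ℂ,
      PowerSeries.coeff 0 φ = 0 ∧ Cm1 φ = Cb b φ + b₁ := by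
  set F : (ℕ → ℂ) → ℕ → ℂ := fun f m => ((m : ℂ) + 1)⁻¹ * higherOrderTerms b b₁ (mk f) (m + 2)
  have hF : IsCausal F := by
    intro f g m h
    simp only [F, higherOrderTerms_congr b₁ hb fun j hj => (coeff_mk j f).trans <|
      (h j hj).trans (coeff_mk j g).symm]
  rw [bijective_mk.existsUnique_iff]
  convert existsUnique_of_isCausal 0 hF using 2 with f
  rw [Cm1_eq_Cb_add_iff b₁ hb hb₁, coeff_mk]
  refine and_congr_right fun _ => forall_congr' fun m => ?_
  rw [coeff_mk, eq_inv_mul_iff_mul_eq₀ (Nat.cast_add_one_ne_zero m)]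
end
end

section
/- For every formal power series φ ∈ z⁻¹ℂ[[z⁻¹]], the series (C_{id−1} − Id)φ, i.e. φ(z−1) − φ(z), lies in z⁻²ℂ[[z⁻¹]], and the map C_{id−1} − Id : z⁻¹ℂ[[z⁻¹]] → z⁻²ℂ[[z⁻¹]] is a bijection. -/
open Finset
open scoped Real

noncomputable section

open PowerSeries

/-!
Writing `φ = Σ aₘ z⁻ᵐ` and expanding `(z - 1)⁻ᵐ` binomially, the coefficient of `z⁻ⁿ` in
`φ(z - 1) - φ(z)` is `Σ_{m<n} C(n-1, n-m) aₘ`. It vanishes for `n ≤ 1`, and for `z⁻⁽ⁿ⁺¹⁾` it is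
`n aₙ` plus a combination of `a₁, …, aₙ₋₁` once `a₀ = 0`. Hence `(C_{id-1} - Id)φ = ψ` is a
lower-triangular linear system for `(a₁, a₂, …)` with nonzero diagonal, which has exactly one
solution.
-/

section LowerTriangular

variable {K : Type*} [Field K] (c : ℕ → ℕ → K) (b : ℕ → K)

def lowerTriangularSolve (n : ℕ) : K :=
  (c n n)⁻¹ * (b n - ∑ m ∈ (range n).attach, c n m * lowerTriangularSolve m)
decreasing_by exact mem_range.mp m.2

variable {c b}

theorem sum_range_succ_mul_lowerTriangularSolve (hc : ∀ n, c n n ≠ 0) (n : ℕ) :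
    ∑ m ∈ range (n + 1), c n m * lowerTriangularSolve c b m = b n := by
  rw [sum_range_succ, lowerTriangularSolve, mul_inv_cancel_left₀ (hc n),
    sum_attach (range n) fun m => c n m * lowerTriangularSolve c b m,
    add_sub_cancel]

theorem eq_lowerTriangularSolve (hc : ∀ n, c n n ≠ 0) {a : ℕ → K}
    (ha : ∀ n, ∑ m ∈ range (n + 1), c n m * a m = b n) :
    a = lowerTriangularSolve c b := by
  funext n
  induction n using Nat.strong_induction_on with
  | _ n ih =>
    have hsol := sum_range_succ_mul_lowerTriangularSolve (b := b) hc n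
    rw [← ha n, sum_range_succ, sum_range_succ,
      sum_congr rfl fun m hm => by rw [← ih m (mem_range.mp hm)]] at hsol
    exact (mul_left_cancel₀ (hc n) (add_left_cancel hsol)).symm

end LowerTriangular

lemma coeff_Dz_succ (φ : ℂ⟦X⟧) (n : ℕ) : coeff (n + 1) (Dz φ) = -n * coeff n φ := by
  simp [Dz]

lemma coeff_iterate_Dz (φ : ℂ⟦X⟧) (n k : ℕ) :
    coeff (n + k) (Dz^[k] φ) = (-1) ^ k * n.ascFactorial k * coeff n φ := by
  induction k with
  | zero => simp
  | succ k ih =>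
    rw [Function.iterate_succ_apply', ← add_assoc, coeff_Dz_succ, ih, Nat.ascFactorial_succ]
    push_cast
    ring

lemma coeff_Cm1 (φ : ℂ⟦X⟧) (n : ℕ) :
    coeff n (Cm1 φ) = ∑ m ∈ range (n + 1), ((n - 1).choose (n - m) : ℂ) * coeff m φ := by
  rw [Cm1, coeff_mk, ← sum_range_reflect]
  refine sum_congr rfl fun m hm => ?_
  obtain ⟨k, rfl⟩ := Nat.exists_eq_add_of_le (Nat.lt_succ_iff.mp (mem_range.mp hm))
  rw [show m + k + 1 - 1 - m = k by omega, Nat.add_sub_cancel_left, coeff_iterate_Dz,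
    Nat.ascFactorial_eq_factorial_mul_choose']
  have hk : (k.factorial : ℂ) ≠ 0 := by exact_mod_cast k.factorial_ne_zero
  push_cast
  field_simp
  rw [← pow_mul, pow_mul', neg_one_sq, one_pow, one_mul]

lemma coeff_Cm1_sub_self (φ : ℂ⟦X⟧) (n : ℕ) :
    coeff n (Cm1 φ - φ) = ∑ m ∈ range n, ((n - 1).choose (n - m) : ℂ) * coeff m φ := by
  simp [coeff_Cm1, sum_range_succ]

lemma coeff_zero_Cm1_sub_self (φ : ℂ⟦X⟧) : coeff 0 (Cm1 φ - φ) = 0 := by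
  simp [coeff_Cm1_sub_self]

lemma coeff_one_Cm1_sub_self (φ : ℂ⟦X⟧) : coeff 1 (Cm1 φ - φ) = 0 := by
  simp [coeff_Cm1_sub_self]

lemma coeff_Cm1_sub_self_add_two (φ : ℂ⟦X⟧) (hφ : coeff 0 φ = 0) (n : ℕ) :
    coeff (n + 2) (Cm1 φ - φ) =
      ∑ m ∈ range (n + 1), ((n + 1).choose (n + 1 - m) : ℂ) * coeff (m + 1) φ := by
  rw [coeff_Cm1_sub_self, sum_range_succ']
  simp [hφ]

/-- for `φ ∈ z⁻¹ℂ[[z⁻¹]]`, `(C_{id-1} - Id)φ ∈ z⁻²ℂ[[z⁻¹]]`, and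
`C_{id-1} - Id : z⁻¹ℂ[[z⁻¹]] → z⁻²ℂ[[z⁻¹]]` is a bijection. -/
theorem statement2 :
    (∀ φ : PowerSeries ℂ, PowerSeries.coeff 0 φ = 0 →
      PowerSeries.coeff 0 (Cm1 φ - φ) = 0 ∧ PowerSeries.coeff 1 (Cm1 φ - φ) = 0) ∧
    Set.BijOn (fun φ => Cm1 φ - φ)
      {φ : PowerSeries ℂ | PowerSeries.coeff 0 φ = 0}
      {ψ : PowerSeries ℂ | PowerSeries.coeff 0 ψ = 0 ∧ PowerSeries.coeff 1 ψ = 0} := by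
  set c : ℕ → ℕ → ℂ := fun n m => ((n + 1).choose (n + 1 - m) : ℂ)
  have hc : ∀ n, c n n ≠ 0 := fun n => by simpa [c] using n.cast_add_one_ne_zero
  have hmaps (φ : ℂ⟦X⟧) := And.intro (coeff_zero_Cm1_sub_self φ) (coeff_one_Cm1_sub_self φ)
  refine ⟨fun φ _ => hmaps φ, fun φ _ => hmaps φ, ?inj, ?surj⟩
  case inj =>
    intro φ hφ φ' hφ' h
    have htail : (fun m => coeff (m + 1) φ) = fun m => coeff (m + 1) φ' := by
      rw [eq_lowerTriangularSolve hc fun n => (coeff_Cm1_sub_self_add_two φ hφ n).symm,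
        eq_lowerTriangularSolve hc fun n => (coeff_Cm1_sub_self_add_two φ' hφ' n).symm]
      exact congrArg (fun ψ => lowerTriangularSolve c fun n => coeff (n + 2) ψ) h
    ext (_ | m)
    · exact hφ.trans hφ'.symm
    · exact congrFun htail m
  case surj =>
    rintro ψ ⟨hψ0, hψ1⟩
    refine ⟨mk fun | 0 => 0 | m + 1 => lowerTriangularSolve c (fun n => coeff (n + 2) ψ) m,
      coeff_mk _ _, ?_⟩
    ext (_ | _ | n)
    · exact (coeff_zero_Cm1_sub_self _).trans hψ0.symm
    · exact (coeff_one_Cm1_sub_self _).trans hψ1.symm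
    · rw [coeff_Cm1_sub_self_add_two _ (coeff_mk _ _)]
      simp only [coeff_mk]
      exact sum_range_succ_mul_lowerTriangularSolve hc n

end
end

section
/- For every φ̃ ∈ z⁻¹ℂ[[z⁻¹]], the formal Borel transform of (C_{id−1} − Id)φ̃, i.e. of φ̃(z−1) − φ̃(z), equals (e^ζ − 1)·𝓑φ̃(ζ) in ℂ[[ζ]], where e^ζ denotes the exponential power series. Consequently, the Borel counterpart of the inverse operator E := (C_{id−1} − Id)⁻¹ : z⁻²ℂ[[z⁻¹]] → z⁻¹ℂ[[z⁻¹]] is division by e^ζ − 1: for every ψ̃ ∈ z⁻²ℂ[[z⁻¹]], (e^ζ − 1)·𝓑(Eψ̃) = 𝓑ψ̃. -/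
/-!
Under the Borel transform `d/dz` becomes multiplication by `-ζ`, so the Taylor expansion
`Σ (-1)^k/k! (d/dz)^k` defining `C_{id-1}` becomes multiplication by `Σ ζ^k/k! = e^ζ`.
The statement about `E` is this identity applied to `φ̃ = Eψ̃`.
-/

open Finset
open scoped Real

noncomputable section

/-- The formal Borel transform `𝓑 : Σ_{n≥0} cₙ z^{-n-1} ↦ Σ_{n≥0} cₙ ζⁿ/n!`
(in the source, the `n`-th coefficient of the `PowerSeries` represents the
coefficient of `z^{-n}`; in the target it represents the coefficient of `ζ^n`). -/
def borelT (φ : PowerSeries ℂ) : PowerSeries ℂ :=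
  PowerSeries.mk fun n => PowerSeries.coeff (n + 1) φ / (Nat.factorial n : ℂ)

open PowerSeries

lemma coeff_borelT (φ : PowerSeries ℂ) (n : ℕ) :
    coeff n (borelT φ) = coeff (n + 1) φ / n.factorial :=
  coeff_mk _ _

lemma borelT_sub (φ ψ : PowerSeries ℂ) : borelT (φ - ψ) = borelT φ - borelT ψ := by
  ext n
  simp only [coeff_borelT, map_sub, sub_div]

lemma borelT_Dz (φ : PowerSeries ℂ) : borelT (Dz φ) = -X * borelT φ := by
  ext n
  rcases n with _ | m
  · simp [coeff_borelT, Dz]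
  · have hm : ((m + 1).factorial : ℂ) = (m + 1) * m.factorial := by
      push_cast [Nat.factorial_succ]; ring
    have : (m.factorial : ℂ) ≠ 0 := Nat.cast_ne_zero.mpr m.factorial_ne_zero
    simp only [coeff_borelT, Dz, coeff_mk, neg_mul, map_neg, coeff_succ_X_mul, hm]
    field_simp
    push_cast
    ring

lemma borelT_iterate_Dz (k : ℕ) (φ : PowerSeries ℂ) :
    borelT (Dz^[k] φ) = (-X) ^ k * borelT φ := by
  induction k with
  | zero => simp
  | succ k ih => rw [Function.iterate_succ_apply', borelT_Dz, ih, pow_succ]; ring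

lemma borelT_Cm1 (φ : PowerSeries ℂ) : borelT (Cm1 φ) = exp ℂ * borelT φ := by
  ext n
  have hDz (k : ℕ) : coeff (n + 1) (Dz^[k] φ) / n.factorial
      = (-1) ^ k * if k ≤ n then coeff (n - k) (borelT φ) else 0 := by
    have hX : (-X : PowerSeries ℂ) ^ k = C ((-1) ^ k) * X ^ k := by
      rw [← neg_one_mul, mul_pow, map_pow, map_neg, map_one]
    rw [← coeff_borelT, borelT_iterate_Dz, hX, mul_assoc, coeff_C_mul, coeff_X_pow_mul']
  have hCm1 : coeff n (borelT (Cm1 φ)) = ∑ k ∈ range (n + 2),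
      (-1) ^ k / k.factorial * (coeff (n + 1) (Dz^[k] φ) / n.factorial) := by
    simp only [coeff_borelT, Cm1, coeff_mk, sum_div, mul_div_assoc]
  -- the `k = n + 1` term of the truncated Taylor sum vanishes
  rw [hCm1, sum_range_succ, hDz, if_neg (by omega), mul_zero, mul_zero, add_zero, coeff_mul,
    Nat.sum_antidiagonal_eq_sum_range_succ fun i j ↦ coeff i (exp ℂ) * coeff j (borelT φ)]
  refine sum_congr rfl fun k hk ↦ ?_
  have hsign : (-1 : ℂ) ^ k * (-1) ^ k = 1 := by rw [← mul_pow]; norm_num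
  rw [hDz, if_pos (Nat.lt_succ_iff.mp (mem_range.mp hk)), coeff_exp, map_div₀, map_one, map_natCast]
  linear_combination (coeff (n - k) (borelT φ) / k.factorial) * hsign

lemma borelT_Cm1_sub_self (φ : PowerSeries ℂ) :
    borelT (Cm1 φ - φ) = (exp ℂ - 1) * borelT φ := by
  rw [borelT_sub, borelT_Cm1]
  ring

/-- for `φ̃ ∈ z⁻¹ℂ[[z⁻¹]]`, `𝓑((C_{id-1} - Id)φ̃) = (e^ζ - 1)·𝓑φ̃`;
consequently the Borel counterpart of `E := (C_{id-1} - Id)⁻¹` is division by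
`e^ζ - 1`: for `ψ̃ ∈ z⁻²ℂ[[z⁻¹]]`, `(e^ζ - 1)·𝓑(Eψ̃) = 𝓑ψ̃`. -/
theorem statement3 :
    (∀ φ : PowerSeries ℂ, PowerSeries.coeff 0 φ = 0 →
      borelT (Cm1 φ - φ) = (PowerSeries.exp ℂ - 1) * borelT φ) ∧
    (∀ E : PowerSeries ℂ → PowerSeries ℂ,
      (∀ ψ : PowerSeries ℂ, (∀ n < 2, PowerSeries.coeff n ψ = 0) →
        PowerSeries.coeff 0 (E ψ) = 0 ∧ Cm1 (E ψ) - E ψ = ψ) →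
      ∀ ψ : PowerSeries ℂ, (∀ n < 2, PowerSeries.coeff n ψ = 0) →
        (PowerSeries.exp ℂ - 1) * borelT (E ψ) = borelT ψ) := by
  refine ⟨fun φ _ ↦ borelT_Cm1_sub_self φ, fun E hE ψ hψ ↦ ?_⟩
  rw [← borelT_Cm1_sub_self, (hE ψ hψ).2]
end
end

section
/- Let b ∈ z⁻¹ℂ[[z⁻¹]]. For every φ ∈ ℂ[[z⁻¹]], the series of formal series Σ_{k≥1} (1/k!) b^k (d/dz)^k φ is formally convergent and its sum equals Bφ := C_{id+b}φ − φ = φ(z+b(z)) − φ(z); moreover B increases the order in z⁻¹ by at least two units: if φ ∈ z^{−m−1}ℂ[[z⁻¹]] then Bφ ∈ z^{−m−3}ℂ[[z⁻¹]]. -/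
open Finset
open scoped Real

noncomputable section

/-! Each Taylor term `b^k (d/dz)^k φ / k!` is divisible by `X^k` through `b^k` and by
`X^(m+1+k)` through `(d/dz)^k φ`, hence by `X^(m+1+2k)`. The first bound makes the Taylor
series formally convergent, the second gives the gain of two orders for `k ≥ 1`. -/

open PowerSeries

lemma X_pow_succ_dvd_Dz {M : ℕ} {ψ : PowerSeries ℂ} (h : X ^ M ∣ ψ) :
    X ^ (M + 1) ∣ Dz ψ := by
  rw [X_pow_dvd_iff] at h ⊢
  rintro (_ | n) hn
  · simp [Dz]
  · simp [Dz, h n (by omega)]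

lemma X_pow_add_dvd_Dz_iterate {M : ℕ} {ψ : PowerSeries ℂ} (h : X ^ M ∣ ψ) (k : ℕ) :
    X ^ (M + k) ∣ Dz^[k] ψ := by
  induction k with
  | zero => simpa using h
  | succ k ih =>
    rw [Function.iterate_succ_apply']
    exact X_pow_succ_dvd_Dz ih

lemma X_pow_dvd_pow {R : Type*} [CommSemiring R] {b : PowerSeries R}
    (hb : coeff 0 b = 0) (k : ℕ) : X ^ k ∣ b ^ k := by
  have hXb : X ∣ b := by rwa [X_dvd_iff, ← coeff_zero_eq_constantCoeff_apply]
  exact pow_dvd_pow_of_dvd hXb k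

lemma coeff_pow_mul_eq_zero {R : Type*} [CommSemiring R] {b : PowerSeries R}
    (hb : coeff 0 b = 0) (ψ : PowerSeries R) {k n : ℕ} (hn : n < k) :
    coeff n (b ^ k * ψ) = 0 :=
  X_pow_dvd_iff.1 (dvd_mul_of_dvd_left (X_pow_dvd_pow hb k) ψ) n hn

lemma coeff_Cb_sub_self (b φ : PowerSeries ℂ) (n : ℕ) :
    coeff n (Cb b φ - φ) =
      ∑ k ∈ Finset.Icc 1 n, (Nat.factorial k : ℂ)⁻¹ * coeff n (b ^ k * Dz^[k] φ) := by
  rw [map_sub, Cb, coeff_mk, Finset.range_eq_Ico, Finset.sum_eq_sum_Ico_succ_bot (by omega),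
    Finset.Ico_add_one_right_eq_Icc]
  simp

lemma X_pow_dvd_Cb_sub_self {b φ : PowerSeries ℂ} (hb : coeff 0 b = 0) {m : ℕ}
    (hφ : X ^ (m + 1) ∣ φ) : X ^ (m + 3) ∣ Cb b φ - φ := by
  rw [X_pow_dvd_iff]
  intro n hn
  rw [coeff_Cb_sub_self]
  refine Finset.sum_eq_zero fun k hk => ?_
  have hterm : X ^ (m + 1 + k + k) ∣ b ^ k * Dz^[k] φ := by
    rw [pow_add, mul_comm (b ^ k)]
    exact mul_dvd_mul (X_pow_add_dvd_Dz_iterate hφ k) (X_pow_dvd_pow hb k)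
  rw [X_pow_dvd_iff.1 hterm n (by rw [Finset.mem_Icc] at hk; omega), mul_zero]

/-- for `b ∈ z⁻¹ℂ[[z⁻¹]]` and any `φ ∈ ℂ[[z⁻¹]]`, the series
`Σ_{k≥1} (1/k!) b^k (d/dz)^k φ` is formally convergent (each coefficient receives
only finitely many nonzero contributions) with sum `Bφ := C_{id+b}φ - φ`
(coefficientwise, the `n`-th coefficient of `Bφ` is the finite sum over
`1 ≤ k ≤ n`); moreover `B` increases the order by at least two units:
`φ ∈ z^{-m-1}ℂ[[z⁻¹]]  ⟹  Bφ ∈ z^{-m-3}ℂ[[z⁻¹]]`. -/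
theorem statement4 (b : PowerSeries ℂ) (hb : PowerSeries.coeff 0 b = 0)
    (φ : PowerSeries ℂ) :
    (∀ n : ℕ, {k : ℕ | k ≥ 1 ∧
      PowerSeries.coeff n ((Nat.factorial k : ℂ)⁻¹ • (b ^ k * Dz^[k] φ)) ≠ 0}.Finite) ∧
    (∀ n : ℕ, PowerSeries.coeff n (Cb b φ - φ) =
      ∑ k ∈ Finset.Icc 1 n,
        (Nat.factorial k : ℂ)⁻¹ * PowerSeries.coeff n (b ^ k * Dz^[k] φ)) ∧
    (∀ m : ℕ, (∀ n < m + 1, PowerSeries.coeff n φ = 0) →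
      ∀ n < m + 3, PowerSeries.coeff n (Cb b φ - φ) = 0) := by
  refine ⟨fun n => ?_, coeff_Cb_sub_self b φ, fun m hφ => ?_⟩
  · refine (Set.finite_Icc 1 n).subset fun k ⟨hk1, hk⟩ => ⟨hk1, not_lt.1 fun hnk => hk ?_⟩
    rw [map_smul, coeff_pow_mul_eq_zero hb _ hnk, smul_zero]
  · exact X_pow_dvd_iff.1 (X_pow_dvd_Cb_sub_self hb (X_pow_dvd_iff.2 hφ))
end
end

section
/- Let ρ ∈ ℂ, 0 < δ' < δ < π/2, and let v be holomorphic on 𝒫⁺_{R,δ} of the form v(z) = z + ρ Log⁺ z + φ(z), where φ and its derivative satisfy |φ(z)| ≤ K|z|⁻¹ and |φ'(z)| ≤ K|z|⁻² on 𝒫⁺_{R,δ} for some K > 0. Then there exists R₂ ≥ R such that v is injective on 𝒫⁺_{R₂,δ}, and there exists R' > 0 such that the image v(𝒫⁺_{R₂,δ}) contains 𝒫⁺_{R',δ'}. -/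
open Finset
open scoped Real

noncomputable section

/-- The sector `𝒫⁺_{R,δ} = {r e^{iθ} : r > R, -π/2-δ < θ < π/2+δ}`. -/
def Pp (R δ : ℝ) : Set ℂ := {z : ℂ | R < ‖z‖ ∧ |Complex.arg z| < Real.pi / 2 + δ}

/-- The sector `𝒫⁻_{R,δ} = {r e^{iθ} : r > R, π/2-δ < θ < 3π/2+δ}`. -/
def Pm (R δ : ℝ) : Set ℂ := {z : ℂ | -z ∈ Pp R δ}

/-!
Write `v = id + g` with `g z = ρ log z + φ z`. Where `‖z‖ ≥ 2 (‖ρ‖ + K) + 1` we have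
`‖g' z‖ ≤ 1/2`, so `g` is `1/2`-Lipschitz on convex subsets of the sector.

Injectivity: if `v z₁ = v z₂` then `z₁ - z₂ = g z₂ - g z₁`, and `log` being `1/R₂`-Lipschitz in
modulus (with arguments differing by at most `2π`) bounds `‖z₁ - z₂‖` by a constant. The sector is
not convex, but it is the union of the half-planes `Re (z e^{∓iδ}) > 0`, and a point of
`𝒫⁺_{R₂,δ}` lying only in the first is more than `2 R₂ cos δ` away from one lying only in the
second. So for large `R₂` the segment
`[z₁, z₂]` stays in a slightly smaller sector, and the Lipschitz bound gives
`‖z₁ - z₂‖ ≤ ‖z₁ - z₂‖ / 2`.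

Surjectivity: for `w ∈ 𝒫⁺_{R',δ'}` the ball `B(w, η ‖w‖)` with `η = (sin δ - sin δ') / 2` lies in
`𝒫⁺_{R₂,δ}`, and `g = O(log ‖w‖) = o(‖w‖)` on it, so `z ↦ w - g z` is a contraction of that ball;
its fixed point solves `v z = w`.
-/

open Complex ComplexConjugate Filter Metric Set

theorem abs_arg_lt_pi_div_two_add_iff {δ : ℝ} (hδ₀ : -(π / 2) ≤ δ) (hδ₁ : δ ≤ π / 2) {z : ℂ}
    (hz : z ≠ 0) : |arg z| < π / 2 + δ ↔ -Real.sin δ * ‖z‖ < z.re := by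
  rw [← Real.strictAntiOn_cos.lt_iff_gt ⟨by linarith, by linarith⟩ ⟨abs_nonneg _, abs_arg_le_pi z⟩,
    Real.cos_abs, cos_arg hz, add_comm, Real.cos_add_pi_div_two, lt_div_iff₀ (norm_pos_iff.2 hz)]

theorem abs_arg_lt_pi_div_two_add_iff_halfPlanes {δ : ℝ} (hδ₀ : 0 ≤ δ) (hδ₁ : δ < π / 2) {z : ℂ}
    (hz : z ≠ 0) : |arg z| < π / 2 + δ ↔
      0 < Real.cos δ * z.re + Real.sin δ * z.im ∨ 0 < Real.cos δ * z.re - Real.sin δ * z.im := by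
  rw [abs_arg_lt_pi_div_two_add_iff (by linarith) hδ₁.le hz]
  have hs : 0 ≤ Real.sin δ := Real.sin_nonneg_of_nonneg_of_le_pi hδ₀ (by linarith)
  have hc : 0 < Real.cos δ := Real.cos_pos_of_mem_Ioo ⟨by linarith, hδ₁⟩
  have hn : 0 < ‖z‖ := norm_pos_iff.2 hz
  -- the two sides are `Re (z e^{∓iδ})`, so their product is `(Re z)² - (‖z‖ sin δ)²`
  have key : (Real.cos δ * z.re + Real.sin δ * z.im) * (Real.cos δ * z.re - Real.sin δ * z.im)
      = (z.re - Real.sin δ * ‖z‖) * (z.re + Real.sin δ * ‖z‖) := by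
    have hn2 : ‖z‖ ^ 2 = z.re ^ 2 + z.im ^ 2 := by rw [Complex.sq_norm, normSq_apply]; ring
    linear_combination z.re ^ 2 * Real.sin_sq_add_cos_sq δ + Real.sin δ ^ 2 * hn2
  have hsn : 0 ≤ Real.sin δ * ‖z‖ := mul_nonneg hs hn.le
  constructor
  · intro h
    by_contra! h'
    obtain ⟨hP, hQ⟩ := h'
    have hre : z.re ≤ 0 := by nlinarith
    have := mul_nonneg_of_nonpos_of_nonpos hP hQ
    nlinarith
  · intro h
    by_contra! h'
    have hprod : 0 ≤ (Real.cos δ * z.re + Real.sin δ * z.im) *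
        (Real.cos δ * z.re - Real.sin δ * z.im) :=
      key ▸ mul_nonneg_of_nonpos_of_nonpos (by linarith) (by linarith)
    have hcre : 0 < Real.cos δ * z.re := by
      rcases h with h | h
      · linarith [nonneg_of_mul_nonneg_right hprod h]
      · linarith [nonneg_of_mul_nonneg_left hprod h]
    linarith [pos_of_mul_pos_right hcre hc.le]

theorem cos_mul_norm_le_im {δ : ℝ} (hδ₀ : 0 ≤ δ) (hδ₁ : δ < π / 2) {z : ℂ}
    (hP : 0 < Real.cos δ * z.re + Real.sin δ * z.im)
    (hQ : Real.cos δ * z.re - Real.sin δ * z.im ≤ 0) : Real.cos δ * ‖z‖ ≤ z.im := by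
  have hs : 0 ≤ Real.sin δ := Real.sin_nonneg_of_nonneg_of_le_pi hδ₀ (by linarith)
  have hc : 0 < Real.cos δ := Real.cos_pos_of_mem_Ioo ⟨by linarith, hδ₁⟩
  have him : 0 < z.im := by nlinarith
  have hre : (Real.cos δ * z.re) ^ 2 ≤ (Real.sin δ * z.im) ^ 2 :=
    sq_le_sq' (by linarith) (by linarith)
  have hsq : (Real.cos δ * ‖z‖) ^ 2 ≤ z.im ^ 2 := by
    have hn2 : ‖z‖ ^ 2 = z.re ^ 2 + z.im ^ 2 := by rw [Complex.sq_norm, normSq_apply]; ring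
    nlinarith [Real.sin_sq_add_cos_sq δ]
  exact pow_le_pow_iff_left₀ (by positivity) him.le two_ne_zero |>.1 hsq

theorem Pp_subset_Pp {R R' δ : ℝ} (h : R' ≤ R) : Pp R δ ⊆ Pp R' δ :=
  fun _ hz => ⟨h.trans_lt hz.1, hz.2⟩

theorem ne_zero_of_mem_Pp {R δ : ℝ} (hR : 0 ≤ R) {z : ℂ} (hz : z ∈ Pp R δ) : z ≠ 0 :=
  norm_pos_iff.1 (hR.trans_lt hz.1)

theorem mem_Pp_iff {R δ : ℝ} (hR : 0 ≤ R) (hδ₀ : -(π / 2) ≤ δ) (hδ₁ : δ ≤ π / 2) {z : ℂ} :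
    z ∈ Pp R δ ↔ R < ‖z‖ ∧ -Real.sin δ * ‖z‖ < z.re :=
  and_congr_right fun h => abs_arg_lt_pi_div_two_add_iff hδ₀ hδ₁ (norm_pos_iff.1 (hR.trans_lt h))

theorem Pp_subset_slitPlane {R δ : ℝ} (hR : 0 ≤ R) (hδ : δ < π / 2) : Pp R δ ⊆ slitPlane := by
  refine fun z hz => mem_slitPlane_iff_arg.2 ⟨fun h => ?_, ne_zero_of_mem_Pp hR hz⟩
  have := hz.2
  rw [h, abs_of_pos Real.pi_pos] at this
  linarith

theorem isOpen_Pp {R δ : ℝ} (hR : 0 ≤ R) (hδ : δ < π / 2) : IsOpen (Pp R δ) :=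
  isOpen_iff_mem_nhds.2 fun _ hz =>
    (continuousAt_const.eventually_lt continuous_norm.continuousAt hz.1).and
      ((continuousAt_arg (Pp_subset_slitPlane hR hδ hz)).abs.eventually_lt continuousAt_const hz.2)

theorem closedBall_subset_Pp {R δ δ' d : ℝ} {w : ℂ} (hR : 0 ≤ R) (hδ₀ : 0 ≤ δ) (hδ₁ : δ ≤ π / 2)
    (hδ'₀ : -(π / 2) ≤ δ') (hδ'₁ : δ' ≤ π / 2) (hw : w ∈ Pp 0 δ')
    (hd : (1 + Real.sin δ) * d ≤ (Real.sin δ - Real.sin δ') * ‖w‖) (hRd : R + d < ‖w‖) :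
    closedBall w d ⊆ Pp R δ := by
  intro u hu
  rw [mem_closedBall, dist_eq_norm] at hu
  have hw' := ((mem_Pp_iff le_rfl hδ'₀ hδ'₁).1 hw).2
  have hs : 0 ≤ Real.sin δ := Real.sin_nonneg_of_nonneg_of_le_pi hδ₀ (by linarith)
  have hnorm : ‖w‖ - d ≤ ‖u‖ := by linarith [norm_sub_norm_le w u, norm_sub_rev u w]
  have hre : w.re - d ≤ u.re := by
    linarith [(abs_le.1 ((abs_re_le_norm (u - w)).trans hu)).1, sub_re u w]
  refine (mem_Pp_iff hR (by linarith) hδ₁).2 ⟨by linarith, ?_⟩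
  nlinarith [mul_le_mul_of_nonneg_left hnorm hs]

theorem two_mul_cos_lt_norm_sub {R δ : ℝ} (hδ₀ : 0 ≤ δ) (hδ₁ : δ < π / 2) {x y : ℂ}
    (hx : R < ‖x‖) (hy : R < ‖y‖)
    (hPx : 0 < Real.cos δ * x.re + Real.sin δ * x.im)
    (hQx : Real.cos δ * x.re - Real.sin δ * x.im ≤ 0)
    (hQy : 0 < Real.cos δ * y.re - Real.sin δ * y.im)
    (hPy : Real.cos δ * y.re + Real.sin δ * y.im ≤ 0) :
    2 * R * Real.cos δ < ‖x - y‖ := by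
  have hc : 0 < Real.cos δ := Real.cos_pos_of_mem_Ioo ⟨by linarith, hδ₁⟩
  have hxim := cos_mul_norm_le_im hδ₀ hδ₁ hPx hQx
  have hyim := cos_mul_norm_le_im hδ₀ hδ₁ (z := conj y) (by simpa [sub_eq_add_neg] using hQy)
    (by simpa [sub_eq_add_neg] using hPy)
  rw [norm_conj, conj_im] at hyim
  have hxy := (abs_le.1 (abs_im_le_norm (x - y))).2
  rw [sub_im] at hxy
  nlinarith [mul_lt_mul_of_pos_left hx hc, mul_lt_mul_of_pos_left hy hc]

theorem segment_subset_Pp {R δ : ℝ} (hδ₀ : 0 ≤ δ) (hδ₁ : δ < π / 2) {z₁ z₂ : ℂ}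
    (hz₁ : z₁ ∈ Pp R δ) (hz₂ : z₂ ∈ Pp R δ) (hd : ‖z₁ - z₂‖ ≤ 2 * R * Real.cos δ) :
    segment ℝ z₁ z₂ ⊆ Pp (R - ‖z₁ - z₂‖) δ := by
  have hc : 0 < Real.cos δ := Real.cos_pos_of_mem_Ioo ⟨by linarith, hδ₁⟩
  have hR : 0 ≤ R := by nlinarith [norm_nonneg (z₁ - z₂)]
  have hP : Convex ℝ {z : ℂ | 0 < Real.cos δ * z.re + Real.sin δ * z.im} := by
    simpa using convex_halfSpace_gt (Real.cos δ • reLm + Real.sin δ • imLm).isLinear 0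
  have hQ : Convex ℝ {z : ℂ | 0 < Real.cos δ * z.re - Real.sin δ * z.im} := by
    simpa using convex_halfSpace_gt (Real.cos δ • reLm - Real.sin δ • imLm).isLinear 0
  have h₁ := (abs_arg_lt_pi_div_two_add_iff_halfPlanes hδ₀ hδ₁ (ne_zero_of_mem_Pp hR hz₁)).1 hz₁.2
  have h₂ := (abs_arg_lt_pi_div_two_add_iff_halfPlanes hδ₀ hδ₁ (ne_zero_of_mem_Pp hR hz₂)).1 hz₂.2
  intro u hu
  have hu' : 0 < Real.cos δ * u.re + Real.sin δ * u.im ∨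
      0 < Real.cos δ * u.re - Real.sin δ * u.im := by
    by_cases hPP : 0 < Real.cos δ * z₁.re + Real.sin δ * z₁.im ∧
        0 < Real.cos δ * z₂.re + Real.sin δ * z₂.im
    · exact .inl (hP.segment_subset hPP.1 hPP.2 hu)
    by_cases hQQ : 0 < Real.cos δ * z₁.re - Real.sin δ * z₁.im ∧
        0 < Real.cos δ * z₂.re - Real.sin δ * z₂.im
    · exact .inr (hQ.segment_subset hQQ.1 hQQ.2 hu)
    refine absurd hd (not_le.2 ?_)
    rcases h₁ with h₁ | h₁ <;> rcases h₂ with h₂ | h₂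
    · exact absurd ⟨h₁, h₂⟩ hPP
    · exact two_mul_cos_lt_norm_sub hδ₀ hδ₁ hz₁.1 hz₂.1 h₁ (not_lt.1 fun h => hQQ ⟨h, h₂⟩) h₂
        (not_lt.1 fun h => hPP ⟨h₁, h⟩)
    · rw [norm_sub_rev]
      exact two_mul_cos_lt_norm_sub hδ₀ hδ₁ hz₂.1 hz₁.1 h₂ (not_lt.1 fun h => hQQ ⟨h₁, h⟩) h₁
        (not_lt.1 fun h => hPP ⟨h, h₂⟩)
    · exact absurd ⟨h₁, h₂⟩ hQQ
  have hu0 : u ≠ 0 := by rintro rfl; simp at hu'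
  refine ⟨?_, (abs_arg_lt_pi_div_two_add_iff_halfPlanes hδ₀ hδ₁ hu0).2 hu'⟩
  linarith [norm_sub_le_of_mem_segment hu, norm_sub_norm_le z₁ u, norm_sub_rev u z₁,
    norm_sub_rev z₂ z₁, hz₁.1]

theorem abs_log_sub_log_le {r a b : ℝ} (hr : 0 < r) (ha : r ≤ a) (hb : r ≤ b) :
    |Real.log a - Real.log b| ≤ |a - b| / r := by
  wlog hab : a ≤ b generalizing a b
  · rw [abs_sub_comm, abs_sub_comm a]
    exact this hb ha (le_of_not_ge hab)
  have ha0 : 0 < a := hr.trans_le ha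
  have hb0 : 0 < b := hr.trans_le hb
  rw [abs_sub_comm, abs_of_nonneg (sub_nonneg.2 (Real.log_le_log ha0 hab)), abs_sub_comm,
    abs_of_nonneg (sub_nonneg.2 hab), ← Real.log_div hb0.ne' ha0.ne']
  calc Real.log (b / a) ≤ b / a - 1 := Real.log_le_sub_one_of_pos (div_pos hb0 ha0)
    _ = (b - a) / a := by field_simp
    _ ≤ (b - a) / r := div_le_div_of_nonneg_left (sub_nonneg.2 hab) hr ha

theorem norm_log_sub_log_le {r : ℝ} (hr : 0 < r) {z₁ z₂ : ℂ} (h₁ : r ≤ ‖z₁‖) (h₂ : r ≤ ‖z₂‖) :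
    ‖log z₁ - log z₂‖ ≤ ‖z₁ - z₂‖ / r + 2 * π := by
  refine (norm_le_abs_re_add_abs_im _).trans ?_
  rw [sub_re, sub_im, log_re, log_re, log_im, log_im]
  have hre := (abs_log_sub_log_le hr h₁ h₂).trans
    (div_le_div_of_nonneg_right (abs_norm_sub_norm_le z₁ z₂) hr.le)
  have him := (abs_sub _ _).trans (add_le_add (abs_arg_le_pi z₁) (abs_arg_le_pi z₂))
  linarith

theorem norm_log_le_log_norm_add_pi {z : ℂ} (hz : 1 ≤ ‖z‖) : ‖log z‖ ≤ Real.log ‖z‖ + π := by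
  refine (norm_le_abs_re_add_abs_im _).trans ?_
  rw [log_re, log_im, abs_of_nonneg (Real.log_nonneg hz)]
  exact add_le_add_right (abs_arg_le_pi z) _

theorem eventually_mul_log_add_le (A B : ℝ) {η : ℝ} (hη : 0 < η) :
    ∀ᶠ r in atTop, A * Real.log r + B ≤ η * r := by
  filter_upwards [((Real.isLittleO_log_id_atTop.const_mul_left A).add
    (Asymptotics.isLittleO_const_id_atTop B)).bound hη, eventually_ge_atTop 0] with r hr hr0
  exact (le_abs_self _).trans (by simpa [abs_of_nonneg hr0] using hr)

section Perturbation

variable {ρ : ℂ} {δ R K : ℝ} {φ : ℂ → ℂ}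

theorem hasDerivAt_mul_log_add (hR : 0 ≤ R) (hδ : δ < π / 2)
    (hφ : DifferentiableOn ℂ φ (Pp R δ)) {u : ℂ} (hu : u ∈ Pp R δ) :
    HasDerivAt (fun z => ρ * log z + φ z) (ρ * u⁻¹ + deriv φ u) u :=
  ((hasDerivAt_log (Pp_subset_slitPlane hR hδ hu)).const_mul ρ).add
    (hφ.differentiableAt ((isOpen_Pp hR hδ).mem_nhds hu)).hasDerivAt

theorem norm_mul_inv_add_le_half {u w : ℂ} (hK : 0 ≤ K) (hw : ‖w‖ ≤ K * ‖u‖⁻¹ ^ 2)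
    (hu : 2 * (‖ρ‖ + K) + 1 ≤ ‖u‖) : ‖ρ * u⁻¹ + w‖ ≤ 2⁻¹ := by
  have hu0 : 0 < ‖u‖ := by linarith [norm_nonneg ρ]
  have hinv : ‖u‖⁻¹ ≤ 1 := inv_le_one_of_one_le₀ (by linarith [norm_nonneg ρ])
  have hw' : ‖w‖ ≤ K * ‖u‖⁻¹ :=
    hw.trans (by rw [sq, ← mul_assoc]; exact mul_le_of_le_one_right (by positivity) hinv)
  calc ‖ρ * u⁻¹ + w‖ ≤ ‖ρ‖ * ‖u‖⁻¹ + K * ‖u‖⁻¹ :=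
        (norm_add_le _ _).trans (by rw [norm_mul, norm_inv]; linarith)
    _ = (‖ρ‖ + K) / ‖u‖ := by ring
    _ ≤ 2⁻¹ := by rw [div_le_iff₀ hu0]; linarith

theorem lipschitzOnWith_mul_log_add (hR : 0 ≤ R) (hK : 0 ≤ K) (hδ : δ < π / 2)
    (hφ : DifferentiableOn ℂ φ (Pp R δ)) (hφ' : ∀ z ∈ Pp R δ, ‖deriv φ z‖ ≤ K * ‖z‖⁻¹ ^ 2)
    {R₁ : ℝ} (hRR₁ : R ≤ R₁) (hR₁ : 2 * (‖ρ‖ + K) + 1 ≤ R₁) {s : Set ℂ} (hs : Convex ℝ s)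
    (hsP : s ⊆ Pp R₁ δ) : LipschitzOnWith 2⁻¹ (fun z => ρ * log z + φ z) s := by
  have hsR : s ⊆ Pp R δ := hsP.trans (Pp_subset_Pp hRR₁)
  refine hs.lipschitzOnWith_of_nnnorm_hasDerivWithin_le
    (fun u hu => (hasDerivAt_mul_log_add hR hδ hφ (hsR hu)).hasDerivWithinAt) fun u hu => ?_
  rw [← NNReal.coe_le_coe, coe_nnnorm, NNReal.coe_inv, NNReal.coe_ofNat]
  exact norm_mul_inv_add_le_half hK (hφ' u (hsR hu)) (hR₁.trans (hsP hu).1.le)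

theorem norm_le_const_of_one_le_norm (hK : 0 ≤ K) (hφb : ∀ z ∈ Pp R δ, ‖φ z‖ ≤ K * ‖z‖⁻¹) {z : ℂ}
    (hz : z ∈ Pp R δ) (h1 : 1 ≤ ‖z‖) : ‖φ z‖ ≤ K :=
  (hφb z hz).trans (mul_le_of_le_one_right hK (inv_le_one_of_one_le₀ h1))

theorem norm_mul_log_add_le (hK : 0 ≤ K) (hφb : ∀ z ∈ Pp R δ, ‖φ z‖ ≤ K * ‖z‖⁻¹) {z : ℂ}
    (hz : z ∈ Pp R δ) (h1 : 1 ≤ ‖z‖) : ‖ρ * log z + φ z‖ ≤ ‖ρ‖ * (Real.log ‖z‖ + π) + K := by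
  refine (norm_add_le _ _).trans ?_
  rw [norm_mul]
  gcongr
  exacts [norm_log_le_log_norm_add_pi h1, norm_le_const_of_one_le_norm hK hφb hz h1]

theorem norm_sub_le_of_add_mul_log_add_eq (hK : 0 ≤ K)
    (hφb : ∀ z ∈ Pp R δ, ‖φ z‖ ≤ K * ‖z‖⁻¹) {R₁ : ℝ} (hRR₁ : R ≤ R₁)
    (hR₁ : 2 * (‖ρ‖ + K) + 1 ≤ R₁) {z₁ z₂ : ℂ} (hz₁ : z₁ ∈ Pp R₁ δ) (hz₂ : z₂ ∈ Pp R₁ δ)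
    (h : z₁ + ρ * log z₁ + φ z₁ = z₂ + ρ * log z₂ + φ z₂) :
    ‖z₁ - z₂‖ ≤ 4 * π * ‖ρ‖ + 4 * K := by
  have hR₁1 : 1 ≤ R₁ := by linarith [norm_nonneg ρ]
  have hR₁0 : 0 < R₁ := by linarith
  have hφ₁ := norm_le_const_of_one_le_norm hK hφb (Pp_subset_Pp hRR₁ hz₁) (by linarith [hz₁.1])
  have hφ₂ := norm_le_const_of_one_le_norm hK hφb (Pp_subset_Pp hRR₁ hz₂) (by linarith [hz₂.1])
  have hlog := mul_le_mul_of_nonneg_left (norm_log_sub_log_le hR₁0 hz₂.1.le hz₁.1.le)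
    (norm_nonneg ρ)
  have hρ : ‖ρ‖ * (‖z₂ - z₁‖ / R₁) ≤ ‖z₁ - z₂‖ / 2 := by
    rw [norm_sub_rev, mul_div_assoc', div_le_div_iff₀ hR₁0 two_pos]
    nlinarith [norm_nonneg (z₁ - z₂)]
  have hg : ‖z₁ - z₂‖ ≤ ‖ρ‖ * ‖log z₂ - log z₁‖ + (‖φ z₂‖ + ‖φ z₁‖) :=
    calc ‖z₁ - z₂‖ = ‖ρ * (log z₂ - log z₁) + (φ z₂ - φ z₁)‖ := by
          congr 1; linear_combination h
      _ ≤ ‖ρ‖ * ‖log z₂ - log z₁‖ + (‖φ z₂‖ + ‖φ z₁‖) :=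
          (norm_add_le _ _).trans (by rw [norm_mul]; gcongr; exact norm_sub_le _ _)
  nlinarith

theorem injOn_add_mul_log_add (hR : 0 ≤ R) (hK : 0 ≤ K) (hδ₀ : 0 ≤ δ) (hδ : δ < π / 2)
    (hφ : DifferentiableOn ℂ φ (Pp R δ)) (hφb : ∀ z ∈ Pp R δ, ‖φ z‖ ≤ K * ‖z‖⁻¹)
    (hφ' : ∀ z ∈ Pp R δ, ‖deriv φ z‖ ≤ K * ‖z‖⁻¹ ^ 2) {R₂ : ℝ}
    (hR₂ : R + (2 * (‖ρ‖ + K) + 1) + (4 * π * ‖ρ‖ + 4 * K) ≤ R₂)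
    (hR₂δ : 4 * π * ‖ρ‖ + 4 * K ≤ 2 * R₂ * Real.cos δ) :
    InjOn (fun z => z + ρ * log z + φ z) (Pp R₂ δ) := by
  intro z₁ hz₁ z₂ hz₂ h
  simp only at h
  have hD : 0 ≤ 4 * π * ‖ρ‖ + 4 * K := by positivity
  have hd := norm_sub_le_of_add_mul_log_add_eq hK hφb (by linarith [norm_nonneg ρ]) (by linarith)
    hz₁ hz₂ h
  have hlip := lipschitzOnWith_mul_log_add (ρ := ρ) hR hK hδ hφ hφ' (by linarith [norm_nonneg ρ])
    (by linarith)
    (convex_segment z₁ z₂) (segment_subset_Pp hδ₀ hδ hz₁ hz₂ (hd.trans hR₂δ))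
  have hcontr := hlip.dist_le_mul z₁ (left_mem_segment ℝ z₁ z₂) z₂ (right_mem_segment ℝ z₁ z₂)
  have hg : ρ * log z₁ + φ z₁ - (ρ * log z₂ + φ z₂) = -(z₁ - z₂) := by linear_combination h
  rw [dist_eq_norm, dist_eq_norm, hg, norm_neg, NNReal.coe_inv, NNReal.coe_ofNat] at hcontr
  exact sub_eq_zero.1 (norm_eq_zero.1 (by linarith [norm_nonneg (z₁ - z₂)]))

theorem mem_image_add_mul_log_add (hR : 0 ≤ R) (hK : 0 ≤ K) (hδ₀ : 0 ≤ δ) (hδ : δ < π / 2)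
    (hφ : DifferentiableOn ℂ φ (Pp R δ)) (hφb : ∀ z ∈ Pp R δ, ‖φ z‖ ≤ K * ‖z‖⁻¹)
    (hφ' : ∀ z ∈ Pp R δ, ‖deriv φ z‖ ≤ K * ‖z‖⁻¹ ^ 2) {δ' R₂ η : ℝ} (hδ'₀ : 0 ≤ δ')
    (hδ'₁ : δ' ≤ π / 2) (hRR₂ : R ≤ R₂) (hR₂ : 2 * (‖ρ‖ + K) + 1 ≤ R₂) (hη : 0 ≤ η)
    (hηδ : 2 * η ≤ Real.sin δ - Real.sin δ') {w : ℂ} (hw : w ∈ Pp 0 δ') (hwR₂ : 2 * R₂ < ‖w‖)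
    (hwlog : ‖ρ‖ * Real.log ‖w‖ + (‖ρ‖ * (Real.log 2 + π) + K) ≤ η * ‖w‖) :
    w ∈ (fun z => z + ρ * log z + φ z) '' Pp R₂ δ := by
  have hη₁ : η ≤ 2⁻¹ := by
    linarith [Real.sin_le_one δ, Real.sin_nonneg_of_nonneg_of_le_pi hδ'₀ (by linarith)]
  have hB : closedBall w (η * ‖w‖) ⊆ Pp R₂ δ :=
    closedBall_subset_Pp (hR.trans hRR₂) hδ₀ hδ.le (by linarith) hδ'₁ hw
      (by nlinarith [mul_le_mul_of_nonneg_right (show (1 + Real.sin δ) * η ≤ 2 * η by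
        nlinarith [Real.sin_le_one δ]) (norm_nonneg w)]) (by nlinarith)
  set T : ℂ → ℂ := fun z => w - (ρ * log z + φ z) with hT
  have hTB : MapsTo T (closedBall w (η * ‖w‖)) (closedBall w (η * ‖w‖)) := by
    intro z hz
    have h1 : 1 ≤ ‖z‖ := by linarith [(hB hz).1, norm_nonneg ρ]
    have h2 : ‖z‖ ≤ 2 * ‖w‖ := by
      linarith [norm_le_norm_add_norm_sub' z w, mem_closedBall_iff_norm.1 hz,
        mul_le_mul_of_nonneg_right hη₁ (norm_nonneg w)]
    have hlog : Real.log ‖z‖ ≤ Real.log 2 + Real.log ‖w‖ := by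
      rw [← Real.log_mul two_ne_zero (by linarith)]
      exact Real.log_le_log (by positivity) h2
    rw [mem_closedBall_iff_norm, hT, sub_sub_cancel_left, norm_neg]
    nlinarith [norm_mul_log_add_le (ρ := ρ) hK hφb (Pp_subset_Pp hRR₂ (hB hz)) h1,
      mul_le_mul_of_nonneg_left hlog (norm_nonneg ρ)]
  have hTlip : LipschitzOnWith 2⁻¹ T (closedBall w (η * ‖w‖)) := by
    have hg := lipschitzOnWith_mul_log_add hR hK hδ hφ hφ' hRR₂ hR₂ (convex_closedBall _ _) hB
    exact LipschitzOnWith.of_dist_le_mul fun x hx y hy => by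
      rw [hT, dist_sub_left]
      exact hg.dist_le_mul x hx y hy
  obtain ⟨z, hzB, hz, -⟩ := ContractingWith.exists_fixedPoint' isClosed_closedBall.isComplete hTB
    ⟨by norm_num, hTlip.mapsToRestrict hTB⟩ (mem_closedBall_self (by positivity))
    (edist_ne_top _ _)
  refine ⟨z, hB hzB, ?_⟩
  have hz' : w - (ρ * log z + φ z) = z := hz
  linear_combination -hz'

end Perturbation

/-- let `v(z) = z + ρ Log⁺ z + φ(z)` on `𝒫⁺_{R,δ}` with
`|φ(z)| ≤ K|z|⁻¹` and `|φ'(z)| ≤ K|z|⁻²`.  Then `v` is injective on `𝒫⁺_{R₂,δ}`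
for some `R₂ ≥ R`, and its image contains a sector `𝒫⁺_{R',δ'}`. -/
theorem statement14 (ρ : ℂ) (δ δ' R K : ℝ)
    (hδ'0 : 0 < δ') (hδ' : δ' < δ) (hδ : δ < Real.pi / 2)
    (hR : 0 < R) (hK : 0 < K)
    (φ : ℂ → ℂ) (hφ : DifferentiableOn ℂ φ (Pp R δ))
    (hφb : ∀ z ∈ Pp R δ, ‖φ z‖ ≤ K * ‖z‖⁻¹)
    (hφ' : ∀ z ∈ Pp R δ, ‖deriv φ z‖ ≤ K * (‖z‖⁻¹) ^ 2)
    (v : ℂ → ℂ) (hv : ∀ z ∈ Pp R δ, v z = z + ρ * Complex.log z + φ z) :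
    ∃ R₂ : ℝ, R ≤ R₂ ∧ Set.InjOn v (Pp R₂ δ) ∧
      ∃ R' : ℝ, 0 < R' ∧ Pp R' δ' ⊆ v '' (Pp R₂ δ) := by
  have hδ0 : 0 < δ := hδ'0.trans hδ'
  have hc : 0 < Real.cos δ := Real.cos_pos_of_mem_Ioo ⟨by linarith, hδ⟩
  have hD : 0 ≤ 4 * π * ‖ρ‖ + 4 * K := by positivity
  obtain ⟨R₂, hR₂, hR₂δ⟩ := ((eventually_ge_atTop
    (R + (2 * (‖ρ‖ + K) + 1) + (4 * π * ‖ρ‖ + 4 * K))).and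
    (((tendsto_id.const_mul_atTop two_pos).atTop_mul_const hc).eventually_ge_atTop
      (4 * π * ‖ρ‖ + 4 * K))).exists
  have hRR₂ : R ≤ R₂ := by linarith [norm_nonneg ρ]
  have hvR₂ : EqOn (fun z => z + ρ * log z + φ z) v (Pp R₂ δ) :=
    fun z hz => (hv z (Pp_subset_Pp hRR₂ hz)).symm
  refine ⟨R₂, hRR₂,
    (injOn_add_mul_log_add hR.le hK.le hδ0.le hδ hφ hφb hφ' hR₂ hR₂δ).congr hvR₂, ?_⟩
  have hη : 0 < (Real.sin δ - Real.sin δ') / 2 := by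
    linarith [Real.sin_lt_sin_of_lt_of_le_pi_div_two (by linarith) hδ.le hδ']
  obtain ⟨r₀, hr₀⟩ := eventually_atTop.1 ((eventually_mul_log_add_le ‖ρ‖
    (‖ρ‖ * (Real.log 2 + π) + K) hη).and (eventually_gt_atTop (2 * R₂)))
  refine ⟨max r₀ 1, by positivity, fun w hw => ?_⟩
  obtain ⟨hwlog, hwR₂⟩ := hr₀ ‖w‖ ((le_max_left _ _).trans hw.1.le)
  rw [← hvR₂.image_eq]
  exact mem_image_add_mul_log_add hR.le hK.le hδ0.le hδ hφ hφb hφ' hδ'0.le (by linarith) hRR₂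
    (by linarith [norm_nonneg ρ]) hη.le (by linarith) (Pp_subset_Pp (by positivity) hw) hwR₂
    hwlog
end
end
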